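/- arXiv:1406.7495 — 4 statements merged into one kernel-verified Lean document; each statement's English description precedes it below -/
import Mathlib

section
/- Conversely, if a probability measure ρ on ℕ^A satisfies λ^j · ρ(f(n+e^j)) = ρ(f(n) n^j) for every j ∈ {1,…,A} and every bounded f : ℕ^A → ℝ, then ρ equals the multivariate Poisson distribution 𝔭_λ. -/
/-- The multivariate Poisson distribution on `ℕ^A` with parameter `lam`. -/
noncomputable def poissonPMF {A : ℕ} (lam : Fin A → ℝ) (n : Fin A → ℕ) : ℝ :=
  Real.exp (-(∑ i, lam i)) * ∏ i, lam i ^ n i / (Nat.factorial (n i))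

set_option maxHeartbeats 1000000 in
/-- Product of summable nonneg series over a pi type. -/
lemma hasSum_pi_prod : ∀ (A : ℕ) (g : Fin A → ℕ → ℝ) (s : Fin A → ℝ),
    (∀ i k, 0 ≤ g i k) → (∀ i, HasSum (g i) (s i)) →
    HasSum (fun n : Fin A → ℕ => ∏ i, g i (n i)) (∏ i, s i) := by
  intro A
  induction A with
  | zero =>
    intro g s _ _
    have : (fun n : Fin 0 → ℕ => ∏ i, g i (n i)) = fun _ => (1 : ℝ) := by
      funext n; simp
    rw [this]
    simpa using hasSum_fintype (fun _ : Fin 0 → ℕ => (1 : ℝ))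
  | succ A ih =>
    intro g s hg hs
    have h0 : HasSum (g 0) (s 0) := hs 0
    have htail : HasSum (fun n : Fin A → ℕ => ∏ i, g i.succ (n i)) (∏ i : Fin A, s i.succ) :=
      ih (fun i : Fin A => g i.succ) (fun i : Fin A => s i.succ) (fun (i : Fin A) k => hg i.succ k) (fun i : Fin A => hs i.succ)
    obtain ⟨F, hF⟩ : ∃ F, F = g 0 := ⟨_, rfl⟩
    obtain ⟨G, hG⟩ : ∃ G, G = fun n : Fin A → ℕ => ∏ i, g i.succ (n i) := ⟨_, rfl⟩
    have h0' : HasSum F (s 0) := hF ▸ h0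
    have htail' : HasSum G (∏ i : Fin A, s i.succ) := hG ▸ htail
    have hsummul : Summable (fun p : ℕ × (Fin A → ℕ) => F p.1 * G p.2) := by
      rw [hF, hG]
      apply Summable.mul_of_nonneg h0.summable htail.summable
      · rw [Pi.le_def]
        intro k
        exact hg 0 k
      · rw [Pi.le_def]
        intro n
        exact Finset.prod_nonneg fun i _ => hg i.succ (n i)
    have hmul' : HasSum (fun p : ℕ × (Fin A → ℕ) => F p.1 * G p.2)
        (s 0 * ∏ i : Fin A, s i.succ) := HasSum.mul h0' htail' hsummul
    rw [hF, hG] at hmul'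
    have hmul : HasSum (fun p : ℕ × (Fin A → ℕ) => g 0 p.1 * ∏ i, g i.succ (p.2 i))
        (s 0 * ∏ i : Fin A, s i.succ) := hmul'
    rw [Fin.prod_univ_succ]
    apply (Equiv.hasSum_iff (Fin.consEquiv (fun _ : Fin (A + 1) => ℕ))).1
    convert hmul using 1
    funext p
    simp only [Function.comp_apply, Fin.consEquiv_apply]
    rw [Fin.prod_univ_succ]
    simp

/-- Converse of Chen's characterization: a probability measure on `ℕ^A` satisfying
the shift identity for every coordinate is the multivariate Poisson distribution. -/
theorem stmt1 (A : ℕ) (hA : 1 ≤ A) (lam : Fin A → ℝ) (hlam : ∀ j, 0 < lam j)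
    (ρ : (Fin A → ℕ) → ℝ) (hρ0 : ∀ n, 0 ≤ ρ n) (hρ1 : ∑' n, ρ n = 1)
    (hChen : ∀ j : Fin A, ∀ f : (Fin A → ℕ) → ℝ, (∃ C, ∀ n, |f n| ≤ C) →
      lam j * ∑' n : Fin A → ℕ, f (fun i => n i + if i = j then 1 else 0) * ρ n
        = ∑' n : Fin A → ℕ, f n * (n j : ℝ) * ρ n) :
    ρ = poissonPMF lam := by
  classical
  set P : (Fin A → ℕ) → ℝ := fun n => ∏ i, lam i ^ n i / (Nat.factorial (n i)) with hP
  -- Step 1: the recursion from the Chen identity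
  have hrec : ∀ (m : Fin A → ℕ) (j : Fin A), 1 ≤ m j →
      (m j : ℝ) * ρ m = lam j * ρ (Function.update m j (m j - 1)) := by
    intro m j hmj
    set m' := Function.update m j (m j - 1) with hm'
    have hshift : ∀ n : Fin A → ℕ,
        ((fun i => n i + if i = j then 1 else 0) = m) ↔ n = m' := by
      intro n
      constructor
      · intro h
        funext i
        have := congrFun h i
        by_cases hij : i = j
        · subst hij
          simp only [if_pos rfl] at this
          simp [hm', Function.update_self, ← this]
        · simp only [if_neg hij] at this
          simp [hm', Function.update_of_ne hij, ← this]
      · intro h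
        subst h
        funext i
        by_cases hij : i = j
        · subst hij
          simp [hm', Nat.sub_add_cancel hmj]
        · simp [hm', Function.update_of_ne hij, hij]
    have hb : ∃ C, ∀ n : Fin A → ℕ, |(if n = m then (1 : ℝ) else 0)| ≤ C := by
      refine ⟨1, fun n => ?_⟩
      by_cases h : n = m <;> simp [h]
    have := hChen j (fun n => if n = m then (1 : ℝ) else 0) hb
    have hL : (∑' n : Fin A → ℕ,
        (if (fun i => n i + if i = j then 1 else 0) = m then (1 : ℝ) else 0) * ρ n) = ρ m' := by
      rw [tsum_eq_single m' (fun n hn => by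
        rw [if_neg (fun h => hn ((hshift n).1 h)), zero_mul])]
      rw [if_pos ((hshift m').2 rfl), one_mul]
    have hR : (∑' n : Fin A → ℕ,
        (if n = m then (1 : ℝ) else 0) * (n j : ℝ) * ρ n) = (m j : ℝ) * ρ m := by
      rw [tsum_eq_single m (fun n hn => by rw [if_neg hn, zero_mul, zero_mul])]
      rw [if_pos rfl, one_mul]
    rw [hL, hR] at this
    linarith
  -- Step 2: ρ m = ρ 0 * P m, by strong induction on the total count
  have hform : ∀ (N : ℕ) (m : Fin A → ℕ), (∑ i, m i) = N → ρ m = ρ 0 * P m := by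
    intro N
    induction N with
    | zero =>
      intro m hm
      have : m = fun _ => 0 := by
        funext i
        exact Finset.sum_eq_zero_iff.1 hm i (Finset.mem_univ i)
      subst this
      have h1 : P (fun _ => 0) = 1 := by simp [hP]
      rw [h1, mul_one]
      rfl
    | succ N ih =>
      intro m hm
      have hex : ∃ j, 1 ≤ m j := by
        by_contra h
        push_neg at h
        have : ∀ j, m j = 0 := fun j => Nat.lt_one_iff.1 (h j)
        simp [this] at hm
      obtain ⟨j, hj⟩ := hex
      set m' := Function.update m j (m j - 1) with hm'def
      have hsum' : (∑ i, m' i) = N := by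
        have h1 : m j + ∑ i ∈ Finset.univ.erase j, m i = ∑ i, m i :=
          Finset.add_sum_erase _ _ (Finset.mem_univ j)
        have h2 : m' j + ∑ i ∈ Finset.univ.erase j, m' i = ∑ i, m' i :=
          Finset.add_sum_erase _ _ (Finset.mem_univ j)
        have h3 : ∑ i ∈ Finset.univ.erase j, m' i = ∑ i ∈ Finset.univ.erase j, m i :=
          Finset.sum_congr rfl (fun i hi => by
            rw [hm'def, Function.update_of_ne (Finset.ne_of_mem_erase hi)])
        have h4 : m' j = m j - 1 := by rw [hm'def, Function.update_self]
        omega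
      have hρm' := ih m' hsum'
      have hr := hrec m j hj
      have hmjpos : (0 : ℝ) < (m j : ℝ) := by exact_mod_cast hj
      have hρm : ρ m = lam j / (m j : ℝ) * ρ m' := by
        field_simp at hr ⊢
        linarith
      -- relate P m and P m'
      have hPm : P m = lam j / (m j : ℝ) * P m' := by
        rw [hP]
        simp only
        rw [← Finset.prod_compl_mul_prod {j}, ← Finset.prod_compl_mul_prod {j}]
        have hcompl : ∀ i ∈ ({j} : Finset (Fin A))ᶜ,
            lam i ^ m i / (Nat.factorial (m i) : ℝ)
              = lam i ^ m' i / (Nat.factorial (m' i) : ℝ) := by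
          intro i hi
          have hij : i ≠ j := by simpa using hi
          rw [hm'def, Function.update_of_ne hij]
        rw [Finset.prod_congr rfl hcompl]
        have hjval : m' j = m j - 1 := by rw [hm'def, Function.update_self]
        obtain ⟨k, hk⟩ : ∃ k, m j = k + 1 := ⟨m j - 1, by omega⟩
        have hk1 : m j - 1 = k := by omega
        have hfac : (Nat.factorial (m j) : ℝ) = (m j : ℝ) * (Nat.factorial (m j - 1) : ℝ) := by
          rw [hk]
          simp only [Nat.add_sub_cancel, Nat.factorial_succ]
          push_cast
          ring
        have hpow : lam j ^ m j = lam j * lam j ^ (m j - 1) := by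
          rw [hk]
          simp only [Nat.add_sub_cancel, pow_succ]
          ring
        simp only [Finset.prod_singleton, hjval, hfac, hpow]
        have hfacpos : (0 : ℝ) < (Nat.factorial (m j - 1) : ℝ) := by
          exact_mod_cast (m j - 1).factorial_pos
        field_simp
      rw [hρm, hρm', hPm]
      ring
  have hform' : ∀ m, ρ m = ρ 0 * P m := fun m => hform (∑ i, m i) m rfl
  -- Step 3: sum of P equals exp (∑ lam)
  have hPsum : HasSum P (Real.exp (∑ i, lam i)) := by
    have hexp : ∀ i : Fin A, HasSum (fun k => lam i ^ k / (Nat.factorial k : ℝ))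
        (Real.exp (lam i)) := by
      intro i
      have hs : Summable (fun k => lam i ^ k / (Nat.factorial k : ℝ)) :=
        Real.summable_pow_div_factorial (lam i)
      have ht : (∑' k, lam i ^ k / (Nat.factorial k : ℝ)) = Real.exp (lam i) := by
        rw [Real.exp_eq_exp_ℝ, NormedSpace.exp_eq_tsum_div]
      exact ht ▸ hs.hasSum
    have := hasSum_pi_prod A (fun i k => lam i ^ k / (Nat.factorial k : ℝ))
      (fun i => Real.exp (lam i))
      (fun i k => div_nonneg (pow_nonneg (hlam i).le k) (Nat.cast_nonneg _)) hexp
    rwa [← Real.exp_sum] at this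
  -- Step 4: normalize
  have hρsum : HasSum ρ (ρ 0 * Real.exp (∑ i, lam i)) := by
    have heq : ρ = fun n => ρ 0 * P n := funext hform'
    nth_rewrite 1 [heq]
    exact hPsum.mul_left (ρ 0)
  have h1 : ρ 0 * Real.exp (∑ i, lam i) = 1 := by
    rw [← hρ1]; exact hρsum.tsum_eq.symm
  have hρzero : ρ 0 = Real.exp (-(∑ i, lam i)) := by
    have hpos : (0 : ℝ) < Real.exp (∑ i, lam i) := Real.exp_pos _
    rw [Real.exp_neg]
    field_simp
    linarith
  funext m
  rw [hform' m, hρzero]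
  rfl
end

section
/- Let λ ∈ (0,∞)^A, v ∈ ℤ^A, and define G_v(n) = ∏_{j=1}^A (n^j!/(n^j - v^j)!) · 1_{n^j ≥ v^j} for n ∈ ℕ^A. Then for every function f : ℤ^A → ℝ that vanishes outside ℕ^A and is bounded, ∑_{n ∈ ℕ^A} f(n + v) 𝔭_λ(n) = λ^{-v} ∑_{n ∈ ℕ^A} f(n) G_v(n) 𝔭_λ(n), where λ^v := ∏_j (λ^j)^{v^j}. -/
/-- `G_v(n) = ∏_j (n^j!/(n^j - v^j)!) 1_{n^j ≥ v^j}`. -/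
noncomputable def Gshift {A : ℕ} (v : Fin A → ℤ) (n : Fin A → ℕ) : ℝ :=
  ∏ j, if v j ≤ (n j : ℤ) then
    (Nat.factorial (n j) : ℝ) / (Nat.factorial ((n j : ℤ) - v j).toNat) else 0

open Nat

lemma zpow_neg_mul_factorial_div_mul_pow_div_factorial {x : ℝ} (hx : x ≠ 0) {m n : ℕ} {v : ℤ}
    (h : (m : ℤ) = n + v) :
    x ^ (-v) * ((m ! : ℝ) / n !) * (x ^ m / m !) = x ^ n / n ! := by
  have hpow : x ^ (-v) * x ^ m = x ^ n := by
    rw [← zpow_natCast x m, ← zpow_natCast x n, ← zpow_add₀ hx]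
    congr 1
    omega
  have hfac : (m ! : ℝ) ≠ 0 := by positivity
  calc x ^ (-v) * ((m ! : ℝ) / n !) * (x ^ m / m !)
      = (x ^ (-v) * x ^ m) * ((m ! : ℝ) / m ! / n !) := by ring
    _ = x ^ n / n ! := by rw [hpow, div_self hfac, mul_one_div]

section Gshift

variable {A : ℕ} {v : Fin A → ℤ}

lemma Gshift_eq_zero_of_lt {m : Fin A → ℕ} {j : Fin A} (hj : (m j : ℤ) < v j) :
    Gshift v m = 0 :=
  Finset.prod_eq_zero (Finset.mem_univ j) (if_neg (not_le.mpr hj))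

lemma Gshift_of_eq_add {m n : Fin A → ℕ} (h : ∀ j, (m j : ℤ) = n j + v j) :
    Gshift v m = ∏ j, ((m j)! : ℝ) / (n j)! := by
  refine Finset.prod_congr rfl fun j _ => ?_
  have hj := h j
  rw [if_pos (by omega), show ((m j : ℤ) - v j).toNat = n j by omega]

lemma zpow_neg_mul_Gshift_mul_poissonPMF {lam : Fin A → ℝ} (hlam : ∀ j, lam j ≠ 0)
    {m n : Fin A → ℕ} (h : ∀ j, (m j : ℤ) = n j + v j) :
    (∏ j, lam j ^ (-(v j))) * (Gshift v m * poissonPMF lam m) = poissonPMF lam n := by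
  rw [Gshift_of_eq_add h, poissonPMF, poissonPMF, ← Finset.prod_congr rfl fun j _ =>
    zpow_neg_mul_factorial_div_mul_pow_div_factorial (hlam j) (h j),
    Finset.prod_mul_distrib, Finset.prod_mul_distrib]
  ring

end Gshift

theorem stmt2_general (A : ℕ) (lam : Fin A → ℝ) (hlam : ∀ j, 0 < lam j) (v : Fin A → ℤ)
    (f : (Fin A → ℤ) → ℝ)
    (hvanish : ∀ z : Fin A → ℤ, ¬ (∀ j, 0 ≤ z j) → f z = 0) :
    ∑' n : Fin A → ℕ, f (fun j => (n j : ℤ) + v j) * poissonPMF lam n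
      = (∏ j, lam j ^ (-(v j))) *
        ∑' n : Fin A → ℕ, f (fun j => (n j : ℤ)) * Gshift v n * poissonPMF lam n := by
  set c := ∏ j, lam j ^ (-(v j))
  let toNat : (Fin A → ℤ) → Fin A → ℕ := fun z j => (z j).toNat
  let H : (Fin A → ℤ) → ℝ := fun z => f z * (Gshift v (toNat z) * poissonPMF lam (toNat z))
  have hH_nonneg {z} (hz : H z ≠ 0) (j : Fin A) : 0 ≤ z j := by
    by_contra! hneg
    exact hz (by simp [H, hvanish z fun h => (h j).not_gt hneg])
  have hH_ge {z} (hz : H z ≠ 0) (j : Fin A) : v j ≤ z j := by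
    by_contra! hlt
    have : ((toNat z j : ℕ) : ℤ) < v j := by simp [toNat, Int.toNat_of_nonneg (hH_nonneg hz j), hlt]
    exact hz (by simp [H, Gshift_eq_zero_of_lt this])
  have hshift (n : Fin A → ℕ) :
      f (fun j => (n j : ℤ) + v j) * poissonPMF lam n = c * H (fun j => (n j : ℤ) + v j) := by
    by_cases hn : ∀ j, 0 ≤ (n j : ℤ) + v j
    · rw [← zpow_neg_mul_Gshift_mul_poissonPMF (fun j => (hlam j).ne')
        (m := toNat fun j => (n j : ℤ) + v j) fun j => Int.toNat_of_nonneg (hn j)]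
      ring
    · simp [H, hvanish _ hn]
  have hLHS : ∑' n : Fin A → ℕ, H (fun j => (n j : ℤ) + v j) = ∑' z, H z :=
    Function.Injective.tsum_eq (fun n n' h => funext fun j => by simpa using congrFun h j)
      fun z hz => ⟨fun j => (z j - v j).toNat, funext fun j => by
        have := hH_ge hz j; simp [Int.toNat_of_nonneg (sub_nonneg.mpr this)]⟩
  have hRHS : ∑' n : Fin A → ℕ, H (fun j => (n j : ℤ)) = ∑' z, H z :=
    Function.Injective.tsum_eq (fun n n' h => funext fun j => by simpa using congrFun h j)
      fun z hz => ⟨toNat z, funext fun j => Int.toNat_of_nonneg (hH_nonneg hz j)⟩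
  simp_rw [hshift, tsum_mul_left, hLHS, ← hRHS, H, toNat, Int.toNat_natCast, mul_assoc]

/-- Density of the absolutely continuous part of the image of `𝔭_λ` under the shift
`θ_v`: for `f` bounded and vanishing outside `ℕ^A`,
`𝔭_λ(f ∘ θ_v) = λ^{-v} 𝔭_λ(f · G_v)`. -/
theorem stmt2 (A : ℕ) (lam : Fin A → ℝ) (hlam : ∀ j, 0 < lam j) (v : Fin A → ℤ)
    (f : (Fin A → ℤ) → ℝ) (hbdd : ∃ C, ∀ z, |f z| ≤ C)
    (hvanish : ∀ z : Fin A → ℤ, ¬ (∀ j, 0 ≤ z j) → f z = 0) :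
    ∑' n : Fin A → ℕ, f (fun j => (n j : ℤ) + v j) * poissonPMF lam n
      = (∏ j, lam j ^ (-(v j))) *
        ∑' n : Fin A → ℕ, f (fun j => (n j : ℤ)) * Gshift v n * poissonPMF lam n :=
  stmt2_general A lam hlam v f hvanish
end

section
/- Let A be a matrix, ker_ℤ(A) its integer kernel, and suppose a lattice basis {b_1,…,b_l} of ker_ℤ(A) contains an element c̄ all of whose coordinates are strictly positive. Then this basis is a generating set: for every n ∈ ℕ^A and every m ∈ (n + ker_ℤ(A)) ∩ ℕ^A, there is a finite sequence n = w_0, w_1, …, w_K = m with each w_k ∈ ℕ^A and each w_k - w_{k-1} ∈ {±b_1,…,±b_l}. -/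
/-! Write `m - n = ∑ zᵢ • bᵢ`. Adding the positive basis vector `c̄` often enough lifts `n` and `m`
to points `n + T • c̄` and `m + T • c̄` that dominate `∑ |zᵢ| • |bᵢ|`; from there the moves
`sign(zᵢ) • bᵢ` can be made one at a time without leaving the nonnegative orthant. -/

open Function Relation

theorem Relation.ReflTransGen.exists_seq {α : Type*} {r : α → α → Prop} {a b : α}
    (h : ReflTransGen r a b) :
    ∃ (K : ℕ) (w : ℕ → α), w 0 = a ∧ w K = b ∧ ∀ k < K, r (w k) (w (k + 1)) := by
  induction h with
  | refl => exact ⟨0, fun _ => a, rfl, rfl, by simp⟩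
  | @tail _ d _ hcd ih =>
    obtain ⟨K, w, hw0, hwK, hw⟩ := ih
    refine ⟨K + 1, update w (K + 1) d, by simp [hw0], by simp, fun k hk => ?_⟩
    rcases Nat.lt_succ_iff_lt_or_eq.mp hk with hk | rfl
    · rw [update_of_ne (by omega), update_of_ne (by omega)]
      exact hw k hk
    · rw [update_of_ne (by omega), update_self, hwK]
      exact hcd

section NonnegStep

variable {ι κ : Type*} {b : κ → ι → ℤ}

/-- Points of `ℕ^ι` are modelled as nonnegative points of `ℤ^ι`. -/
def NonnegStep (b : κ → ι → ℤ) (x y : ι → ℤ) : Prop :=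
  0 ≤ x ∧ 0 ≤ y ∧ ∃ i, y = x + b i ∨ x = y + b i

instance : Std.Symm (NonnegStep b) where
  symm _ _ := fun ⟨hx, hy, i, h⟩ => ⟨hy, hx, i, h.symm⟩

theorem NonnegStep.le_on_toNat :
    NonnegStep b ≤ ((fun u v : ι → ℕ => ∃ i, (∀ j, (v j : ℤ) = u j + b i j) ∨
      (∀ j, (v j : ℤ) = u j - b i j)) on fun x j => (x j).toNat) := by
  rintro x y ⟨hx, hy, i, hxy⟩
  refine ⟨i, ?_⟩
  simp only [Int.toNat_of_nonneg (hx _), Int.toNat_of_nonneg (hy _)]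
  rcases hxy with rfl | rfl
  · exact Or.inl fun j => rfl
  · exact Or.inr fun j => by simp

theorem reflTransGen_nonnegStep_add_natCast_smul {x : ι → ℤ} (i : κ) (hx : 0 ≤ x) :
    ∀ t : ℕ, 0 ≤ x + (t : ℤ) • b i → ReflTransGen (NonnegStep b) x (x + (t : ℤ) • b i)
  | 0 => fun _ => by simpa using ReflTransGen.refl
  | t + 1 => fun ht => by
    -- coordinatewise, `x + t • b i` lies between `x` and `x + (t + 1) • b i`
    have hmid : 0 ≤ x + (t : ℤ) • b i := fun j => by
      have h₀ := hx j
      have h₁ := ht j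
      simp only [Pi.zero_apply, Pi.add_apply, Pi.smul_apply, smul_eq_mul] at h₀ h₁ ⊢
      push_cast at h₁
      rcases le_total 0 (b i j) with h | h <;> nlinarith
    refine (reflTransGen_nonnegStep_add_natCast_smul i hx t hmid).tail ⟨hmid, ht, i, Or.inl ?_⟩
    rw [Nat.cast_succ, add_smul, one_smul, add_assoc]

theorem reflTransGen_nonnegStep_add_smul {x : ι → ℤ} (i : κ) (z : ℤ) (hx : 0 ≤ x)
    (hy : 0 ≤ x + z • b i) : ReflTransGen (NonnegStep b) x (x + z • b i) := by
  obtain ⟨t, rfl | rfl⟩ := Int.eq_nat_or_neg z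
  · exact reflTransGen_nonnegStep_add_natCast_smul i hx t hy
  · rw [neg_smul] at hy ⊢
    have h := reflTransGen_nonnegStep_add_natCast_smul i hy t (by rwa [neg_add_cancel_right])
    rw [neg_add_cancel_right] at h
    exact symm h

theorem reflTransGen_nonnegStep_add_sum (s : Finset κ) (z : κ → ℤ) {x : ι → ℤ}
    (hx : ∑ i ∈ s, |z i| • |b i| ≤ x) :
    ReflTransGen (NonnegStep b) x (x + ∑ i ∈ s, z i • b i) := by
  induction s using Finset.cons_induction generalizing x with
  | empty => simpa using ReflTransGen.refl
  | cons a s ha ih =>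
    rw [Finset.sum_cons] at hx ⊢
    have hs : 0 ≤ ∑ i ∈ s, |z i| • |b i| := Finset.sum_nonneg fun i _ => by positivity
    have hx' : ∑ i ∈ s, |z i| • |b i| ≤ x + z a • b a := fun j => by
      have h := hx j
      have h' := neg_abs_le (z a * b a j)
      simp only [Pi.add_apply, Finset.sum_apply, Pi.smul_apply, smul_eq_mul, Pi.abs_apply,
        abs_mul] at h h' ⊢
      linarith
    have hx₀ : 0 ≤ x := hs.trans (le_add_of_nonneg_left (by positivity)) |>.trans hx
    rw [← add_assoc]
    exact (reflTransGen_nonnegStep_add_smul a (z a) hx₀ (hs.trans hx')).trans (ih hx')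

theorem reflTransGen_nonnegStep_of_sub_mem_span [Fintype ι] [Fintype κ] {i₀ : κ}
    (hpos : ∀ j, 0 < b i₀ j) {x y : ι → ℤ} (hx : 0 ≤ x) (hy : 0 ≤ y)
    (hxy : y - x ∈ Submodule.span ℤ (Set.range b)) : ReflTransGen (NonnegStep b) x y := by
  obtain ⟨z, hz⟩ := (Submodule.mem_span_range_iff_exists_fun ℤ).mp hxy
  set B : ι → ℤ := ∑ i, |z i| • |b i|
  have hB : 0 ≤ B := Finset.sum_nonneg fun i _ => by positivity
  -- shifting by `T • b i₀` moves both points far enough from the boundary of the orthant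
  set T : ℤ := ∑ j, B j
  have hT : 0 ≤ T := Finset.sum_nonneg fun j _ => hB j
  have hBT : B ≤ T • b i₀ := fun j => by
    have h := Finset.single_le_sum (fun j _ => hB j) (Finset.mem_univ j)
    have := hpos j
    simp only [Pi.smul_apply, smul_eq_mul]
    nlinarith
  have hTb : 0 ≤ T • b i₀ := smul_nonneg hT fun j => (hpos j).le
  have hmid : ReflTransGen (NonnegStep b) (x + T • b i₀) (y + T • b i₀) := by
    have h := reflTransGen_nonnegStep_add_sum Finset.univ z (hBT.trans (le_add_of_nonneg_left hx))
    rwa [hz, add_right_comm, add_sub_cancel] at h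
  exact (reflTransGen_nonnegStep_add_smul i₀ T hx (add_nonneg hx hTb)).trans
    (hmid.trans (symm (reflTransGen_nonnegStep_add_smul i₀ T hy (add_nonneg hy hTb))))

end NonnegStep

theorem stmt6_general (d A l : ℕ) (M : Matrix (Fin d) (Fin A) ℝ) (b : Fin l → (Fin A → ℤ))
    (hspan : ∀ c : Fin A → ℤ, M.mulVec (fun j => (c j : ℝ)) = 0 →
      ∃ z : Fin l → ℤ, c = ∑ i, z i • b i)
    (i₀ : Fin l) (hpos : ∀ j, 0 < b i₀ j)
    (n m : Fin A → ℕ)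
    (h : M.mulVec (fun j => (((m j : ℤ) - (n j : ℤ) : ℤ) : ℝ)) = 0) :
    ∃ (K : ℕ) (w : ℕ → Fin A → ℕ), w 0 = n ∧ w K = m ∧ ∀ k < K, ∃ i : Fin l,
      (∀ j, ((w (k + 1)) j : ℤ) = (w k) j + b i j) ∨
      (∀ j, ((w (k + 1)) j : ℤ) = (w k) j - b i j) := by
  obtain ⟨z, hz⟩ := hspan _ h
  have hmem : (fun j => (m j : ℤ)) - (fun j => (n j : ℤ)) ∈ Submodule.span ℤ (Set.range b) :=
    (Submodule.mem_span_range_iff_exists_fun ℤ).mpr ⟨z, hz.symm⟩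
  have hpath := reflTransGen_nonnegStep_of_sub_mem_span hpos (fun j => (n j).cast_nonneg)
    (fun j => (m j).cast_nonneg) hmem
  obtain ⟨K, w, hw0, hwK, hw⟩ := (hpath.lift _ NonnegStep.le_on_toNat).exists_seq
  exact ⟨K, w, by simpa using hw0, by simpa using hwK, hw⟩

/-- If a lattice basis of `ker_ℤ(A)` contains a vector with all coordinates strictly
positive, then it is a generating set: any two points of `ℕ^A` whose difference lies in
`ker_ℤ(A)` are joined by a path in `ℕ^A` with steps `±b_i`. -/
theorem stmt6 (d A l : ℕ) (M : Matrix (Fin d) (Fin A) ℝ) (b : Fin l → (Fin A → ℤ))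
    (hker : ∀ i, M.mulVec (fun j => (b i j : ℝ)) = 0)
    (hindep : LinearIndependent ℤ b)
    (hspan : ∀ c : Fin A → ℤ, M.mulVec (fun j => (c j : ℝ)) = 0 →
      ∃ z : Fin l → ℤ, c = ∑ i, z i • b i)
    (i₀ : Fin l) (hpos : ∀ j, 0 < b i₀ j)
    (n m : Fin A → ℕ)
    (h : M.mulVec (fun j => (((m j : ℤ) - (n j : ℤ) : ℤ) : ℝ)) = 0) :
    ∃ (K : ℕ) (w : ℕ → Fin A → ℕ), w 0 = n ∧ w K = m ∧ ∀ k < K, ∃ i : Fin l,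
      (∀ j, ((w (k + 1)) j : ℤ) = (w k) j + b i j) ∨
      (∀ j, ((w (k + 1)) j : ℤ) = (w k) j - b i j) :=
  stmt6_general d A l M b hspan i₀ hpos n m h
end

section
/- For the lattice ker_ℤ(A) with 𝒜 = {3,4,5}: for any lattice basis B of ker_ℤ(A), there exists a probability measure ρ on ℕ³ and λ ∈ (0,∞)³ such that ρ satisfies the shift identity ρ(f ∘ θ_c) = λ^{-c} ρ(f · G_c) for all c ∈ B and all f vanishing outside ℕ³, but the density dρ/d𝔭_λ is not constant on the leaves {n : A n = const}. Concretely, with f₀ ∈ {(-3,1,1),(1,-2,1),(2,1,-2)} \ B (choosing w.l.o.g. f₀ = (-3,1,1)) and corresponding n₀ ∈ {(3,0,0),(0,2,0),(0,0,2)}, the measure ρ = ε δ_{n₀} + (1-ε) 𝔭_λ (for 0 < ε < 1) satisfies the identity for all c ∈ B but ρ ∉ ℛ_A(𝔭_λ). -/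
/-- The mixture `ρ = ε δ_{n₀} + (1-ε) 𝔭_λ`. -/
noncomputable def mixMeasure (lam : Fin 3 → ℝ) (ε : ℝ) (n₀ n : Fin 3 → ℕ) : ℝ :=
  (if n = n₀ then ε else 0) + (1 - ε) * poissonPMF lam n

/-!
The shift identity for `c` sees the atom `ε δ_{n₀}` only through `f (n₀ + c)` and `G_c(n₀)`, which
vanish unless `n₀ + c ∈ ℕ³` or `n₀ - c ∈ ℕ³`, and for `n₀ = (3,0,0), (0,2,0), (0,0,2)` the only
nonzero kernel vectors with this property are `±f`, `±g`, `±h` respectively. As `f + g + h = 0`,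
a linearly independent `B` avoids both `v` and `-v` for one of these, and with the matching `n₀`
the mixture satisfies every shift identity of `B` as the Poisson law does. Yet `n₀ + v` lies on
the same leaf `{A n = A n₀}` as `n₀` while `dρ/d𝔭_λ` is `1 - ε` there and larger at `n₀`.
-/

open Finset

lemma poissonPMF_pos {A : ℕ} {lam : Fin A → ℝ} (hlam : ∀ j, 0 < lam j) (n : Fin A → ℕ) :
    0 < poissonPMF lam n :=
  mul_pos (Real.exp_pos _) <| prod_pos fun i _ =>
    div_pos (pow_pos (hlam i) _) (mod_cast Nat.factorial_pos _)

lemma Gshift_eq_zero {A : ℕ} {c : Fin A → ℤ} {m : Fin A → ℕ} (h : ¬ ∀ j, c j ≤ m j) :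
    Gshift c m = 0 := by
  push Not at h
  obtain ⟨j, hj⟩ := h
  exact prod_eq_zero (mem_univ j) (if_neg hj.not_ge)

lemma zpow_neg_mul_factorial_div_mul_pow_div_factorial_s11 {x : ℝ} (hx : x ≠ 0) {d : ℤ} {k n : ℕ}
    (hk : (k : ℤ) = n + d) :
    x ^ (-d) * ((k.factorial : ℝ) / n.factorial) * (x ^ k / k.factorial) =
      x ^ n / n.factorial := by
  have hpow : x ^ k = x ^ n * x ^ d := by
    rw [← zpow_natCast, ← zpow_natCast, ← zpow_add₀ hx, hk]
  have hk! : (k.factorial : ℝ) ≠ 0 := mod_cast (Nat.factorial_pos k).ne'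
  rw [hpow, zpow_neg]
  field_simp

lemma prod_zpow_neg_mul_Gshift_mul_poissonPMF {A : ℕ} {lam : Fin A → ℝ} (hlam : ∀ j, lam j ≠ 0)
    {c : Fin A → ℤ} {n m : Fin A → ℕ} (hm : ∀ j, (m j : ℤ) = n j + c j) :
    (∏ j, lam j ^ (-c j)) * Gshift c m * poissonPMF lam m = poissonPMF lam n := by
  have hfactor : ∀ j, lam j ^ (-c j) * (if c j ≤ m j then ((m j).factorial : ℝ) /
      (((m j : ℤ) - c j).toNat).factorial else 0) * (lam j ^ m j / (m j).factorial) =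
        lam j ^ n j / (n j).factorial := by
    intro j
    have := hm j
    rw [if_pos (by omega), show ((m j : ℤ) - c j).toNat = n j by omega]
    exact zpow_neg_mul_factorial_div_mul_pow_div_factorial_s11 (hlam j) (hm j)
  simp only [Gshift, poissonPMF, ← hfactor, prod_mul_distrib]
  ring

lemma tsum_shift_eq {A : ℕ} (c : Fin A → ℤ) {F : (Fin A → ℤ) → ℝ}
    (hF : ∀ z : Fin A → ℤ, ¬ (∀ j, 0 ≤ z j) → F z = 0) {p q : (Fin A → ℕ) → ℝ}
    (hq : ∀ m, ¬ (∀ j, c j ≤ m j) → q m = 0)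
    (hpq : ∀ n m : Fin A → ℕ, (∀ j, (m j : ℤ) = n j + c j) → q m = p n) :
    ∑' n : Fin A → ℕ, F (fun j => n j + c j) * p n = ∑' m : Fin A → ℕ, F (fun j => m j) * q m := by
  have hsupp : ∀ m ∈ Function.support (fun m : Fin A → ℕ => F (fun j => m j) * q m),
      ∀ j, c j ≤ m j := by
    intro m hm
    by_contra h
    simp [hq m h] at hm
  refine tsum_eq_tsum_of_ne_zero_bij (fun m j => ((m.1 j : ℤ) - c j).toNat) ?_ ?_ ?_
  · intro m m' h
    ext j
    have h := congrFun h j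
    have := hsupp m m.2 j
    have := hsupp m' m'.2 j
    simp only at h
    omega
  · intro n hn
    have hnc : ∀ j, 0 ≤ (n j : ℤ) + c j := by
      by_contra h
      simp [hF _ h] at hn
    set m : Fin A → ℕ := fun j => ((n j : ℤ) + c j).toNat
    have hm : ∀ j, (m j : ℤ) = n j + c j := fun j => Int.toNat_of_nonneg (hnc j)
    have hFm : F (fun j => m j) * q m = F (fun j => n j + c j) * p n := by
      rw [hpq n m hm, funext hm]
    refine ⟨⟨m, by rwa [Function.mem_support, hFm]⟩, ?_⟩
    ext j
    simp [hm]
  · rintro ⟨m, hm⟩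
    have hmn : ∀ j, (m j : ℤ) = (((m j : ℤ) - c j).toNat : ℕ) + c j := fun j => by
      have := hsupp m hm j
      omega
    simp only
    rw [hpq _ m hmn, ← funext hmn]

theorem tsum_shift_poissonPMF {A : ℕ} {lam : Fin A → ℝ} (hlam : ∀ j, lam j ≠ 0) (c : Fin A → ℤ)
    {F : (Fin A → ℤ) → ℝ} (hF : ∀ z : Fin A → ℤ, ¬ (∀ j, 0 ≤ z j) → F z = 0) :
    ∑' n : Fin A → ℕ, F (fun j => n j + c j) * poissonPMF lam n =
      (∏ j, lam j ^ (-c j)) * ∑' n : Fin A → ℕ, F (fun j => n j) * Gshift c n * poissonPMF lam n := by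
  rw [← tsum_mul_left, tsum_shift_eq c hF (q := fun m => (∏ j, lam j ^ (-c j)) * Gshift c m *
    poissonPMF lam m) (fun m hm => by rw [Gshift_eq_zero hm]; ring)
    (fun n m hm => prod_zpow_neg_mul_Gshift_mul_poissonPMF hlam hm)]
  exact tsum_congr fun n => by ring

lemma mul_mixMeasure_of_eq_zero {lam : Fin 3 → ℝ} {ε : ℝ} {n₀ : Fin 3 → ℕ}
    {g : (Fin 3 → ℕ) → ℝ} (hg : g n₀ = 0) (n : Fin 3 → ℕ) :
    g n * mixMeasure lam ε n₀ n = (1 - ε) * (g n * poissonPMF lam n) := by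
  by_cases h : n = n₀
  · simp [h, hg]
  · simp [mixMeasure, h]
    ring

/-- The atom `ε δ_{n₀}` enters the two sides only through `f (n₀ + c)` and `G_c(n₀)`, and both
vanish here. -/
theorem tsum_shift_mixMeasure {lam : Fin 3 → ℝ} (hlam : ∀ j, lam j ≠ 0) (ε : ℝ)
    {n₀ : Fin 3 → ℕ} {c : Fin 3 → ℤ} (hup : ¬ ∀ j, 0 ≤ (n₀ j : ℤ) + c j)
    (hdown : ¬ ∀ j, c j ≤ n₀ j) {F : (Fin 3 → ℤ) → ℝ}
    (hF : ∀ z : Fin 3 → ℤ, ¬ (∀ j, 0 ≤ z j) → F z = 0) :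
    ∑' n : Fin 3 → ℕ, F (fun j => n j + c j) * mixMeasure lam ε n₀ n =
      (∏ j, lam j ^ (-c j)) *
        ∑' n : Fin 3 → ℕ, F (fun j => n j) * Gshift c n * mixMeasure lam ε n₀ n := by
  have hG : Gshift c n₀ = 0 := Gshift_eq_zero hdown
  calc ∑' n : Fin 3 → ℕ, F (fun j => n j + c j) * mixMeasure lam ε n₀ n
      = ∑' n : Fin 3 → ℕ, (1 - ε) * (F (fun j => n j + c j) * poissonPMF lam n) :=
        tsum_congr <| mul_mixMeasure_of_eq_zero (g := fun n => F (fun j => n j + c j)) (hF _ hup)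
    _ = (∏ j, lam j ^ (-c j)) *
          ∑' n : Fin 3 → ℕ, (1 - ε) * (F (fun j => n j) * Gshift c n * poissonPMF lam n) := by
        rw [tsum_mul_left, tsum_mul_left, tsum_shift_poissonPMF hlam c hF]
        ring
    _ = (∏ j, lam j ^ (-c j)) *
          ∑' n : Fin 3 → ℕ, F (fun j => n j) * Gshift c n * mixMeasure lam ε n₀ n := by
        congr 1
        exact tsum_congr fun n => (mul_mixMeasure_of_eq_zero
          (g := fun n => F (fun j => n j) * Gshift c n) (by simp [hG]) n).symm

lemma not_exists_density_mixMeasure {β : Type*} {lam : Fin 3 → ℝ} (hlam : ∀ j, 0 < lam j)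
    {ε : ℝ} (hε : ε ≠ 0) {φ : (Fin 3 → ℕ) → β} {n₀ n₁ : Fin 3 → ℕ} (hne : n₁ ≠ n₀)
    (hφ : φ n₁ = φ n₀) :
    ¬ ∃ h : β → ℝ, ∀ n, mixMeasure lam ε n₀ n = h (φ n) * poissonPMF lam n := by
  rintro ⟨h, hh⟩
  have h₁ := hh n₁
  have h₀ := hh n₀
  simp only [mixMeasure, if_neg hne, if_pos, hφ] at h₁ h₀
  have : h (φ n₀) = 1 - ε := mul_right_cancel₀ (poissonPMF_pos hlam n₁).ne' (by linarith)
  rw [this] at h₀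
  exact hε (by linarith)

/-- The paper's `f, g, h ∈ ker_ℤ (3 4 5)`. -/
def move : Fin 3 → Fin 3 → ℤ := ![![-3, 1, 1], ![1, -2, 1], ![2, 1, -2]]

/-- `moveStart i` is the point `n₀` from which `move i` is the only nonzero kernel shift
staying in `ℕ³`. -/
def moveStart : Fin 3 → Fin 3 → ℕ := ![![3, 0, 0], ![0, 2, 0], ![0, 0, 2]]

lemma sum_move : ∑ i, move i = 0 := by
  ext j
  fin_cases j <;> simp [move, Fin.sum_univ_three]

lemma exists_move_not_mem {B : Set (Fin 3 → ℤ)}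
    (hB : LinearIndependent ℤ (fun x : B => (x : Fin 3 → ℤ))) :
    ∃ i, move i ∉ B ∧ -move i ∉ B := by
  by_contra! h
  have : ∀ i, ∃ s : ℤˣ, s • move i ∈ B := fun i => by
    by_cases hi : move i ∈ B
    · exact ⟨1, by simpa using hi⟩
    · exact ⟨-1, by simpa using h i hi⟩
  choose s hs using this
  let b : Fin 3 → B := fun i => ⟨s i • move i, hs i⟩
  -- the first coordinates of the `move i` have the distinct absolute values `3, 1, 2`
  have hb : Function.Injective b := fun i i' hii' => by
    have h0 := congrArg (fun v : Fin 3 → ℤ => (v 0).natAbs) (congrArg Subtype.val hii')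
    simp only [b, Pi.smul_apply, Units.smul_def, smul_eq_mul, Int.natAbs_mul,
      Int.units_natAbs, one_mul] at h0
    fin_cases i <;> fin_cases i' <;> simp_all [move]
  have hsum : ∑ i, (s i : ℤ) • (b i : Fin 3 → ℤ) = 0 := by
    simp only [b, Units.smul_def, smul_smul, ← Units.val_mul, Int.units_mul_self, Units.val_one,
      one_smul, sum_move]
  exact (s 0).ne_zero (Fintype.linearIndependent_iff.mp (hB.comp b hb) _ hsum 0)

lemma not_nonneg_moveStart_add {c : Fin 3 → ℤ} (hc : 3 * c 0 + 4 * c 1 + 5 * c 2 = 0)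
    (i : Fin 3) (hzero : c ≠ 0) (hmove : c ≠ move i) : ¬ ∀ j, 0 ≤ (moveStart i j : ℤ) + c j := by
  intro h
  have := h 0
  have := h 1
  have := h 2
  suffices (c 0 = 0 ∧ c 1 = 0 ∧ c 2 = 0) ∨ (c 0 = move i 0 ∧ c 1 = move i 1 ∧ c 2 = move i 2) by
    rcases this with ⟨e0, e1, e2⟩ | ⟨e0, e1, e2⟩
    · exact hzero (funext fun j => by fin_cases j <;> assumption)
    · exact hmove (funext fun j => by fin_cases j <;> assumption)
  fin_cases i <;> simp [move, moveStart] at * <;> omega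

lemma not_le_moveStart {c : Fin 3 → ℤ} (hc : 3 * c 0 + 4 * c 1 + 5 * c 2 = 0) (i : Fin 3)
    (hzero : c ≠ 0) (hmove : c ≠ -move i) : ¬ ∀ j, c j ≤ moveStart i j := fun h =>
  not_nonneg_moveStart_add (c := -c) (by simp only [Pi.neg_apply]; linarith) i
    (neg_ne_zero.mpr hzero) (fun h' => hmove (by rw [← h', neg_neg]))
    fun j => by simpa [← sub_eq_add_neg] using h j

lemma exists_ne_weight_eq_moveStart (i : Fin 3) :
    ∃ n₁ ≠ moveStart i, 3 * (n₁ 0 : ℤ) + 4 * n₁ 1 + 5 * n₁ 2 =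
      3 * (moveStart i 0 : ℤ) + 4 * moveStart i 1 + 5 * moveStart i 2 := by
  fin_cases i
  · exact ⟨![0, 1, 1], by decide, by simp [moveStart]⟩
  · exact ⟨![1, 0, 1], by decide, by simp [moveStart]⟩
  · exact ⟨![2, 1, 0], by decide, by simp [moveStart]⟩

theorem stmt11_general (B : Set (Fin 3 → ℤ))
    (hindep : LinearIndependent ℤ (fun x : B => (x : Fin 3 → ℤ)))
    (hker : ∀ c ∈ B, 3 * c 0 + 4 * c 1 + 5 * c 2 = 0)
    (lam : Fin 3 → ℝ) (hlam : ∀ j, 0 < lam j) (ε : ℝ) (hε : 0 < ε) :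
    ∃ n₀ ∈ ({![3, 0, 0], ![0, 2, 0], ![0, 0, 2]} : Set (Fin 3 → ℕ)),
      (∀ c ∈ B, ∀ f : (Fin 3 → ℤ) → ℝ,
        (∃ C, ∀ z, |f z| ≤ C) → (∀ z : Fin 3 → ℤ, ¬ (∀ j, 0 ≤ z j) → f z = 0) →
        ∑' n : Fin 3 → ℕ, f (fun j => (n j : ℤ) + c j) * mixMeasure lam ε n₀ n
          = (∏ j, lam j ^ (-(c j))) *
            ∑' n : Fin 3 → ℕ, f (fun j => (n j : ℤ)) * Gshift c n * mixMeasure lam ε n₀ n) ∧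
      ¬ ∃ h : ℤ → ℝ, ∀ n : Fin 3 → ℕ,
        mixMeasure lam ε n₀ n
          = h (3 * (n 0 : ℤ) + 4 * (n 1 : ℤ) + 5 * (n 2 : ℤ)) * poissonPMF lam n := by
  obtain ⟨i, hiB, hiB'⟩ := exists_move_not_mem hindep
  obtain ⟨n₁, hn₁, hweight⟩ := exists_ne_weight_eq_moveStart i
  refine ⟨moveStart i, by fin_cases i <;> simp [moveStart], fun c hc f _ hf => ?_,
    not_exists_density_mixMeasure hlam hε.ne' hn₁ hweight⟩
  have hc0 : c ≠ 0 := fun h => hindep.ne_zero ⟨c, hc⟩ (by simpa using h)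
  exact tsum_shift_mixMeasure (fun j => (hlam j).ne') ε
    (not_nonneg_moveStart_add (hker c hc) i hc0 (ne_of_mem_of_not_mem hc hiB))
    (not_le_moveStart (hker c hc) i hc0 (ne_of_mem_of_not_mem hc hiB')) hf

/-- Counterexample for `𝒜 = {3,4,5}`: for any lattice basis `B` of `ker_ℤ(A)`, any
`λ ∈ (0,∞)³` and any `0 < ε < 1`, there is `n₀ ∈ {(3,0,0),(0,2,0),(0,0,2)}` such that
the mixture `ρ = ε δ_{n₀} + (1-ε) 𝔭_λ` satisfies the shift identity for every `c ∈ B`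
but its density with respect to `𝔭_λ` is not `σ(A n)`-measurable. -/
theorem stmt11 (B : Set (Fin 3 → ℤ))
    (hindep : LinearIndependent ℤ (fun x : B => (x : Fin 3 → ℤ)))
    (hker : ∀ c ∈ B, 3 * c 0 + 4 * c 1 + 5 * c 2 = 0)
    (hspan : ∀ c : Fin 3 → ℤ, 3 * c 0 + 4 * c 1 + 5 * c 2 = 0 → c ∈ Submodule.span ℤ B)
    (lam : Fin 3 → ℝ) (hlam : ∀ j, 0 < lam j) (ε : ℝ) (hε : 0 < ε) (hε1 : ε < 1) :
    ∃ n₀ ∈ ({![3, 0, 0], ![0, 2, 0], ![0, 0, 2]} : Set (Fin 3 → ℕ)),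
      (∀ c ∈ B, ∀ f : (Fin 3 → ℤ) → ℝ,
        (∃ C, ∀ z, |f z| ≤ C) → (∀ z : Fin 3 → ℤ, ¬ (∀ j, 0 ≤ z j) → f z = 0) →
        ∑' n : Fin 3 → ℕ, f (fun j => (n j : ℤ) + c j) * mixMeasure lam ε n₀ n
          = (∏ j, lam j ^ (-(c j))) *
            ∑' n : Fin 3 → ℕ, f (fun j => (n j : ℤ)) * Gshift c n * mixMeasure lam ε n₀ n) ∧
      ¬ ∃ h : ℤ → ℝ, ∀ n : Fin 3 → ℕ,
        mixMeasure lam ε n₀ n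
          = h (3 * (n 0 : ℤ) + 4 * (n 1 : ℤ) + 5 * (n 2 : ℤ)) * poissonPMF lam n :=
  stmt11_general B hindep hker lam hlam ε hε
end
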